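/- The closure of 𝒬_G in C([0,1]) with respect to the supremum norm equals ℱ₂. That is, a continuous function f : [0,1] → ℝ is a uniform limit on [0,1] of (restrictions of) polynomials in 𝒬 if and only if f(0) = f(1) = 0 and 0 ≤ f(x) ≤ 1 for all x ∈ [0,1]. -/
import Mathlib


open Polynomial

/-- 𝒬: real polynomials with q([0,1]) ⊆ [0,1], q ≤ 0 on (-∞,0], q ≤ 0 on [1,∞). -/
def memQ (q : Polynomial ℝ) : Prop :=
  (∀ x ∈ Set.Icc (0:ℝ) 1, q.eval x ∈ Set.Icc (0:ℝ) 1) ∧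
  (∀ x : ℝ, x ≤ 0 → q.eval x ≤ 0) ∧
  (∀ x : ℝ, 1 ≤ x → q.eval x ≤ 0)

/-- 𝒬_G: restrictions to [0,1] of polynomials in 𝒬, as continuous maps. -/
def QG : Set C(Set.Icc (0:ℝ) 1, ℝ) :=
  {g | ∃ q : Polynomial ℝ, memQ q ∧ g = q.toContinuousMapOn (Set.Icc (0:ℝ) 1)}

/-- ℱ₂ : continuous f : [0,1] → ℝ with f(0)=f(1)=0, 0 ≤ f ≤ 1. -/
def F2 : Set C(Set.Icc (0:ℝ) 1, ℝ) :=
  {f | f ⟨0, by norm_num⟩ = 0 ∧ f ⟨1, by norm_num⟩ = 0 ∧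
       ∀ x, f x ∈ Set.Icc (0:ℝ) 1}

set_option maxHeartbeats 2000000 in
theorem stmt_3 : closure QG = F2 := by
  have hQGsub : QG ⊆ F2 := by
    rintro g ⟨q, ⟨h1, h2, h3⟩, rfl⟩
    have e0 : q.eval 0 = 0 :=
      le_antisymm (h2 0 le_rfl) (h1 0 (by norm_num)).1
    have e1 : q.eval 1 = 0 :=
      le_antisymm (h3 1 le_rfl) (h1 1 (by norm_num)).1
    refine ⟨?_, ?_, ?_⟩
    · simpa [Polynomial.toContinuousMapOn_apply, Polynomial.toContinuousMap_apply] using e0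
    · simpa [Polynomial.toContinuousMapOn_apply, Polynomial.toContinuousMap_apply] using e1
    · intro x
      simpa [Polynomial.toContinuousMapOn_apply, Polynomial.toContinuousMap_apply] using
        h1 x.1 x.2
  have hF2closed : IsClosed F2 := by
    have hrw : F2 = {f : C(Set.Icc (0:ℝ) 1, ℝ) | f ⟨0, by norm_num⟩ = 0} ∩
        ({f : C(Set.Icc (0:ℝ) 1, ℝ) | f ⟨1, by norm_num⟩ = 0} ∩
          ⋂ x : Set.Icc (0:ℝ) 1,
            (fun f : C(Set.Icc (0:ℝ) 1, ℝ) => f x) ⁻¹' Set.Icc (0:ℝ) 1) := by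
      ext f
      simp [F2, Set.mem_iInter]
    rw [hrw]
    refine IsClosed.inter ?_ (IsClosed.inter ?_ ?_)
    · exact isClosed_eq (continuous_eval_const _) continuous_const
    · exact isClosed_eq (continuous_eval_const _) continuous_const
    · exact isClosed_iInter fun x =>
        isClosed_Icc.preimage (continuous_eval_const x)
  refine Set.Subset.antisymm (closure_minimal hQGsub hF2closed) ?_
  intro f hf
  obtain ⟨hf0, hf1, hf01⟩ := hf
  rw [Metric.mem_closure_iff]
  intro ε hε
  set η : ℝ := min (ε / 11) 1 with hηdef
  have hη0 : 0 < η := lt_min (by positivity) one_pos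
  have hη1 : η ≤ 1 := min_le_right _ _
  have hηε : 10 * η < ε := by
    have h := min_le_left (ε / 11) 1
    have : η ≤ ε / 11 := h
    linarith
  -- continuity near the endpoints
  obtain ⟨δ₀, hδ₀pos, hδ₀⟩ :=
    Metric.continuousAt_iff.mp
      ((map_continuous f).continuousAt (x := ⟨0, by norm_num⟩)) η hη0
  obtain ⟨δ₁, hδ₁pos, hδ₁⟩ :=
    Metric.continuousAt_iff.mp
      ((map_continuous f).continuousAt (x := ⟨1, by norm_num⟩)) η hη0
  set δ : ℝ := min (min δ₀ δ₁) (1/2) / 2 with hδdef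
  have hδpos : 0 < δ := by
    have h1 : 0 < min (min δ₀ δ₁) (1/2) := lt_min (lt_min hδ₀pos hδ₁pos) (by norm_num)
    positivity
  have hδquarter : δ ≤ 1/4 := by
    have := min_le_right (min δ₀ δ₁) (1/2)
    simp only [hδdef]
    linarith
  have hδ0' : δ < δ₀ := by
    have h1 := min_le_left (min δ₀ δ₁) (1/2)
    have h2 := min_le_left δ₀ δ₁
    simp only [hδdef]
    linarith
  have hδ1' : δ < δ₁ := by
    have h1 := min_le_left (min δ₀ δ₁) (1/2)
    have h2 := min_le_right δ₀ δ₁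
    simp only [hδdef]
    linarith
  have hnear0 : ∀ x : Set.Icc (0:ℝ) 1, x.1 ≤ δ → f x < η := by
    intro x hx
    have hd : dist x (⟨0, by norm_num⟩ : Set.Icc (0:ℝ) 1) < δ₀ := by
      rw [Subtype.dist_eq, Real.dist_eq]
      have h0 : (0:ℝ) ≤ x.1 := x.2.1
      rw [show x.1 - ((⟨0, by norm_num⟩ : Set.Icc (0:ℝ) 1) : ℝ) = x.1 by norm_num,
        abs_of_nonneg h0]
      linarith
    have := hδ₀ hd
    rw [hf0, dist_zero_right, Real.norm_eq_abs, abs_of_nonneg (hf01 x).1] at this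
    exact this
  have hnear1 : ∀ x : Set.Icc (0:ℝ) 1, 1 - δ ≤ x.1 → f x < η := by
    intro x hx
    have hd : dist x (⟨1, by norm_num⟩ : Set.Icc (0:ℝ) 1) < δ₁ := by
      rw [Subtype.dist_eq, Real.dist_eq]
      have h1 : x.1 ≤ 1 := x.2.2
      rw [show x.1 - ((⟨1, by norm_num⟩ : Set.Icc (0:ℝ) 1) : ℝ) = x.1 - 1 by norm_num,
        abs_of_nonpos (by linarith)]
      linarith
    have := hδ₁ hd
    rw [hf1, dist_zero_right, Real.norm_eq_abs, abs_of_nonneg (hf01 x).1] at this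
    exact this
  -- geometric decay
  set b : ℝ := 1 - 2 * δ with hbdef
  have hb0 : 0 ≤ b := by simp only [hbdef]; linarith
  have hb1 : b < 1 := by simp only [hbdef]; linarith
  obtain ⟨n, hn⟩ := exists_pow_lt_of_lt_one hη0 hb1
  -- Weierstrass approximation of sqrt ∘ f
  set F : ℝ → ℝ := fun t => Real.sqrt (f (Set.projIcc (0:ℝ) 1 zero_le_one t)) with hFdef
  have hFc : Continuous F :=
    Real.continuous_sqrt.comp ((map_continuous f).comp continuous_projIcc)
  obtain ⟨r, hr⟩ := exists_polynomial_near_of_continuousOn 0 1 F hFc.continuousOn η hη0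
  have hr' : ∀ x : Set.Icc (0:ℝ) 1, |r.eval x.1 - Real.sqrt (f x)| < η := by
    intro x
    have h := hr x.1 x.2
    have hFx : F x.1 = Real.sqrt (f x) := by
      simp only [hFdef, Set.projIcc_of_mem zero_le_one x.2]
    rwa [hFx] at h
  -- scaling constant
  set a : ℝ := 1 / (1 + 3 * η) with hadef
  have ha0 : 0 < a := by positivity
  have ha : a * (1 + 3 * η) = 1 := by
    rw [hadef]; field_simp
  have ha1 : a ≤ 1 := by nlinarith
  -- the polynomial
  set q : Polynomial ℝ := C a * r ^ 2 * (1 - ((2 * X - 1) ^ 2) ^ n) with hqdef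
  have hq : ∀ x : ℝ, q.eval x = a * (r.eval x) ^ 2 * (1 - ((2 * x - 1) ^ 2) ^ n) := by
    intro x
    simp [hqdef]
  have hp_le : ∀ x : Set.Icc (0:ℝ) 1, (r.eval x.1) ^ 2 ≤ 1 + 3 * η := by
    intro x
    have h := abs_lt.mp (hr' x)
    have hs0 := Real.sqrt_nonneg (f x)
    have hs1 : Real.sqrt (f x) ≤ 1 := Real.sqrt_le_one.mpr (hf01 x).2
    nlinarith
  have hp_near : ∀ x : Set.Icc (0:ℝ) 1, |(r.eval x.1) ^ 2 - f x| ≤ 3 * η := by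
    intro x
    have h := abs_lt.mp (hr' x)
    have hs0 := Real.sqrt_nonneg (f x)
    have hs1 : Real.sqrt (f x) ≤ 1 := Real.sqrt_le_one.mpr (hf01 x).2
    have hsq : Real.sqrt (f x) ^ 2 = f x := Real.sq_sqrt (hf01 x).1
    rw [abs_le]
    constructor <;> nlinarith
  have hmem : memQ q := by
    refine ⟨?_, ?_, ?_⟩
    · intro x hx
      rw [hq]
      have ht1 : (2 * x - 1) ^ 2 ≤ 1 := by nlinarith [hx.1, hx.2]
      have ht0 : (0:ℝ) ≤ (2 * x - 1) ^ 2 := sq_nonneg _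
      have htn1 : ((2 * x - 1) ^ 2) ^ n ≤ 1 := pow_le_one₀ ht0 ht1
      have htn0 : (0:ℝ) ≤ ((2 * x - 1) ^ 2) ^ n := pow_nonneg ht0 n
      have hp : (r.eval x) ^ 2 ≤ 1 + 3 * η := by simpa using hp_le ⟨x, hx⟩
      have hp0 : (0:ℝ) ≤ (r.eval x) ^ 2 := sq_nonneg _
      constructor
      · exact mul_nonneg (mul_nonneg ha0.le hp0) (by linarith)
      · have hap : a * (r.eval x) ^ 2 ≤ 1 := by nlinarith
        nlinarith [mul_nonneg (mul_nonneg ha0.le hp0) htn0]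
    · intro x hx
      rw [hq]
      have h1 : 1 ≤ (2 * x - 1) ^ 2 := by nlinarith
      have h2 : (1:ℝ) ≤ ((2 * x - 1) ^ 2) ^ n := one_le_pow₀ h1
      have hp0 : (0:ℝ) ≤ (r.eval x) ^ 2 := sq_nonneg _
      exact mul_nonpos_of_nonneg_of_nonpos (mul_nonneg ha0.le hp0) (by linarith)
    · intro x hx
      rw [hq]
      have h1 : 1 ≤ (2 * x - 1) ^ 2 := by nlinarith
      have h2 : (1:ℝ) ≤ ((2 * x - 1) ^ 2) ^ n := one_le_pow₀ h1
      have hp0 : (0:ℝ) ≤ (r.eval x) ^ 2 := sq_nonneg _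
      exact mul_nonpos_of_nonneg_of_nonpos (mul_nonneg ha0.le hp0) (by linarith)
  refine ⟨q.toContinuousMapOn _, ⟨q, hmem, rfl⟩, ?_⟩
  rw [ContinuousMap.dist_lt_iff hε]
  intro x
  rw [Polynomial.toContinuousMapOn_apply, Polynomial.toContinuousMap_apply, Real.dist_eq, hq]
  set y : ℝ := f x with hydef
  set p : ℝ := (r.eval x.1) ^ 2 with hpdef
  set T : ℝ := ((2 * x.1 - 1) ^ 2) ^ n with hTdef
  have hT0 : 0 ≤ T := pow_nonneg (sq_nonneg _) n
  have hT1 : T ≤ 1 := pow_le_one₀ (sq_nonneg _) (by nlinarith [x.2.1, x.2.2])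
  have hp0 : 0 ≤ p := sq_nonneg _
  have hp3 : p ≤ 1 + 3 * η := hp_le x
  have hA := abs_le.mp (hp_near x)
  have hy0 : 0 ≤ y := (hf01 x).1
  -- bound p * T ≤ 4η
  have hPT : p * T ≤ 4 * η := by
    rcases le_or_gt x.1 δ with h | h
    · have hyη : y < η := hnear0 x h
      have hpsmall : p ≤ 4 * η := by linarith [hA.2]
      nlinarith
    · rcases le_or_gt (1 - δ) x.1 with h' | h'
      · have hyη : y < η := hnear1 x h'
        have hpsmall : p ≤ 4 * η := by linarith [hA.2]
        nlinarith
      · have hbb : (2 * x.1 - 1) ^ 2 ≤ b ^ 2 := by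
          simp only [hbdef]
          nlinarith
        have hbn0 : 0 ≤ b ^ n := pow_nonneg hb0 n
        have hbn1 : b ^ n ≤ 1 := pow_le_one₀ hb0 hb1.le
        have hTb : T ≤ b ^ n := by
          calc T ≤ (b ^ 2) ^ n := pow_le_pow_left₀ (sq_nonneg _) hbb n
          _ = (b ^ n) ^ 2 := by rw [← pow_mul, ← pow_mul, Nat.mul_comm]
          _ ≤ b ^ n := by nlinarith
        have hTη : T < η := lt_of_le_of_lt hTb hn
        nlinarith
  have hPT0 : 0 ≤ p * T := mul_nonneg hp0 hT0
  have hC : (1 - a) * (p * (1 - T)) ≤ 3 * η := by nlinarith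
  have hC0 : 0 ≤ (1 - a) * (p * (1 - T)) :=
    mul_nonneg (by linarith) (mul_nonneg hp0 (by linarith))
  have key : y - a * p * (1 - T) = (y - p) + p * T + (1 - a) * (p * (1 - T)) := by ring
  rw [abs_lt]
  constructor <;> nlinarith [hA.1, hA.2]
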